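/- arXiv:2111.09671 — 3 statements merged into one kernel-verified Lean document; each statement's English description precedes it below -/
import Mathlib

section
/- Let k ≥ 1 and let φ be a 2-CNF formula over the 2k Boolean variables x_1,…,x_k, y_1,…,y_k that is consistent with the inner product, i.e., sat(φ) ⊆ IP^{-1}(1). Then |sat(φ)| ≤ 3^k. -/
/-- A literal is a pair (variable, required value); an assignment `a` satisfies a
clause (a finite set of literals, interpreted as their disjunction) if some literal
of the clause gets its required value. -/
def ClauseSat {V : Type*} (C : Finset (V × ZMod 2)) (a : V → ZMod 2) : Prop :=
  ∃ l ∈ C, a l.1 = l.2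

/-- The set of satisfying assignments of a CNF formula (a finite list of clauses,
interpreted as their conjunction). -/
def SatAssignments {V : Type*} (φ : List (Finset (V × ZMod 2))) :
    Set (V → ZMod 2) :=
  {a | ∀ C ∈ φ, ClauseSat C a}

/-- The (negated) inner product on `k` pairs of variables: `IP k a` holds if
`∑ i, x_i y_i = 0` over `𝔽₂`, where `x_i = a (Sum.inl i)` and `y_i = a (Sum.inr i)`. -/
def IP (k : ℕ) (a : (Fin k ⊕ Fin k) → ZMod 2) : Prop :=
  ∑ i : Fin k, a (Sum.inl i) * a (Sum.inr i) = 0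

/-!
Induct on slices: fix the values of all pairs outside a set `J` of pairs; on the satisfying
assignments of such a slice the inner product over `J` is constant. Splitting on a pair
`j ∈ J` gives four fibres, each a slice over `J \ {j}` and so of size at most `3 ^ (|J| - 1)`;
if one fibre is empty we are done. Otherwise take `d` in the fibre `x_j = y_j = 1`: flipping
`x_j` changes the inner product, so the flipped assignment falsifies a 2-clause `x_j ∨ ℓ`, and
an assignment in the fibre `(0, 1)` satisfies it through `ℓ`, a literal on another pair of `J`.
Hence `x_j = 0` forces `ℓ`, and symmetrically `y_j = 0` forces a literal. A slice with a forced
variable has at most `2 · 3 ^ (|J| - 2)` elements, so the three fibres with `x_j = 0` or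
`y_j = 0` contribute at most `6 · 3 ^ (|J| - 2)`, and the total is at most `3 ^ |J|`.
-/

open Function Finset

section TwoCNF

variable {V : Type*} [DecidableEq V] {φ : List (Finset (V × ZMod 2))}

/- The clause falsified by the flip is `v = d v ∨ u = b u`, so it is an implication
`v = b v → u = b u`. -/
theorem exists_forced_of_update_notMem (h2 : ∀ C ∈ φ, C.card ≤ 2) {v : V} {d b : V → ZMod 2}
    (hd : d ∈ SatAssignments φ) (hb : b ∈ SatAssignments φ)
    (hflip : update d v (b v) ∉ SatAssignments φ) :
    ∃ u, u ≠ v ∧ d u ≠ b u ∧ ∀ a ∈ SatAssignments φ, a v = b v → a u = b u := by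
  obtain ⟨K, hKφ, hK⟩ : ∃ K ∈ φ, ¬ ClauseSat K (update d v (b v)) := by
    simpa [SatAssignments] using hflip
  have hbd : b v ≠ d v := fun h => hflip (by rwa [h, update_eq_self])
  obtain ⟨l, hlK, hdl⟩ := hd K hKφ
  have hlv : l.1 = v := by
    by_contra h
    exact hK ⟨l, hlK, by rwa [update_of_ne h]⟩
  obtain ⟨l', hl'K, hbl'⟩ := hb K hKφ
  have hll' : l ≠ l' := by
    rintro rfl
    exact hbd (by rw [← hlv, hbl', hdl])
  have hK2 : K = {l, l'} :=
    (eq_of_subset_of_card_le (insert_subset hlK (singleton_subset_iff.2 hl'K))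
      ((h2 K hKφ).trans (card_pair hll').ge)).symm
  have hdl' : update d v (b v) l'.1 ≠ b l'.1 := fun h => hK ⟨l', hl'K, h.trans hbl'⟩
  have huv : l'.1 ≠ v := by
    intro h
    exact hdl' (by rw [h, update_self])
  refine ⟨l'.1, huv, by rwa [update_of_ne huv] at hdl', fun a ha hav => ?_⟩
  obtain ⟨w, hwK, haw⟩ := ha K hKφ
  rw [hK2, mem_insert, mem_singleton] at hwK
  rcases hwK with rfl | rfl
  · exact absurd (hav.symm.trans (by rw [← hlv, haw, hdl])) hbd
  · exact haw.trans hbl'.symm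

end TwoCNF

lemma ncard_le_sum_ncard_fiber {α β : Type*} [Fintype β] (S : Set α) (g : α → β) :
    S.ncard ≤ ∑ y, {a ∈ S | g a = y}.ncard := by
  calc S.ncard = (⋃ y, {a ∈ S | g a = y}).ncard := by
        congr 1
        ext a
        simp
    _ ≤ _ := Set.ncard_iUnion_le_of_fintype _

lemma sum_zmod_two_prod {M : Type*} [AddCommMonoid M] (f : ZMod 2 × ZMod 2 → M) :
    ∑ p, f p = f (0, 0) + f (0, 1) + (f (1, 0) + f (1, 1)) := by
  rw [Fintype.sum_prod_type]
  exact (Fin.sum_univ_two _).trans (congrArg₂ _ (Fin.sum_univ_two _) (Fin.sum_univ_two _))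

namespace PairedAssignment

variable {ι : Type*}

def pairIdx : ι ⊕ ι → ι := Sum.elim id id

@[simp] lemma pairIdx_inl (i : ι) : pairIdx (.inl i : ι ⊕ ι) = i := rfl
@[simp] lemma pairIdx_inr (i : ι) : pairIdx (.inr i : ι ⊕ ι) = i := rfl

def pairVal (a : ι ⊕ ι → ZMod 2) (i : ι) : ZMod 2 × ZMod 2 := (a (.inl i), a (.inr i))

def partialIP (J : Finset ι) (a : ι ⊕ ι → ZMod 2) : ZMod 2 :=
  ∑ i ∈ J, a (.inl i) * a (.inr i)

lemma apply_eq_of_pairVal_eq {a b : ι ⊕ ι → ZMod 2} {u : ι ⊕ ι}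
    (h : pairVal a (pairIdx u) = pairVal b (pairIdx u)) : a u = b u := by
  cases u <;> simp_all [pairVal]

lemma pairVal_eq_of_apply_eq {a b : ι ⊕ ι → ZMod 2} {u : ι ⊕ ι} (hu : a u = b u)
    (hu' : a u.swap = b u.swap) : pairVal a (pairIdx u) = pairVal b (pairIdx u) := by
  cases u <;> simp_all [pairVal]

lemma eq_or_eq_swap_of_pairIdx_eq {u v : ι ⊕ ι} (h : pairIdx u = pairIdx v) :
    u = v ∨ u = v.swap := by
  cases u <;> cases v <;> simp_all

lemma swap_ne (v : ι ⊕ ι) : v.swap ≠ v := by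
  cases v <;> simp

lemma mul_apply_swap (a : ι ⊕ ι → ZMod 2) (v : ι ⊕ ι) :
    a v * a v.swap = a (.inl (pairIdx v)) * a (.inr (pairIdx v)) := by
  cases v
  · rfl
  · exact mul_comm _ _

lemma pairVal_update_of_ne [DecidableEq ι] (a : ι ⊕ ι → ZMod 2) {v : ι ⊕ ι} {i : ι}
    (hi : i ≠ pairIdx v) (x : ZMod 2) : pairVal (update a v x) i = pairVal a i := by
  cases v <;> simp_all [pairVal]

lemma partialIP_eq_add_erase [DecidableEq ι] {J : Finset ι} {j : ι} (hj : j ∈ J)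
    (a : ι ⊕ ι → ZMod 2) :
    partialIP J a = a (.inl j) * a (.inr j) + partialIP (J.erase j) a :=
  (add_sum_erase J _ hj).symm

lemma partialIP_congr {J : Finset ι} {a b : ι ⊕ ι → ZMod 2}
    (h : ∀ i ∈ J, pairVal a i = pairVal b i) : partialIP J a = partialIP J b :=
  sum_congr rfl fun i hi => by simp_all [pairVal, Prod.ext_iff]

def Slice (φ : List (Finset ((ι ⊕ ι) × ZMod 2))) (J : Finset ι) (ρ : ι ⊕ ι → ZMod 2) :
    Set (ι ⊕ ι → ZMod 2) :=
  {a | a ∈ SatAssignments φ ∧ ∀ i ∉ J, pairVal a i = pairVal ρ i}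

def IPConstOn (J : Finset ι) (S : Set (ι ⊕ ι → ZMod 2)) : Prop :=
  ∀ a ∈ S, ∀ b ∈ S, partialIP J a = partialIP J b

def SliceBound (φ : List (Finset ((ι ⊕ ι) × ZMod 2))) (n : ℕ) : Prop :=
  ∀ (J : Finset ι) (ρ : ι ⊕ ι → ZMod 2), J.card = n → IPConstOn J (Slice φ J ρ) →
    (Slice φ J ρ).ncard ≤ 3 ^ n

variable {φ : List (Finset ((ι ⊕ ι) × ZMod 2))} {J : Finset ι} {j : ι} {ρ b : ι ⊕ ι → ZMod 2}

lemma sliceBound_zero [Finite ι] : SliceBound φ 0 := by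
  intro J ρ hJ _
  have hsub : Slice φ J ρ ⊆ {ρ} := fun a ha =>
    funext fun u => apply_eq_of_pairVal_eq (ha.2 _ (by simp [card_eq_zero.1 hJ]))
  exact (Set.ncard_le_ncard hsub (Set.toFinite _)).trans (Set.ncard_singleton ρ).le

variable [DecidableEq ι]

lemma slice_erase_eq (hb : b ∈ Slice φ J ρ) :
    Slice φ (J.erase j) b = {a ∈ Slice φ J ρ | pairVal a j = pairVal b j} := by
  ext a
  constructor
  · rintro ⟨ha, hab⟩
    refine ⟨⟨ha, fun i hi => ?_⟩, hab j (notMem_erase j J)⟩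
    exact (hab i fun h => hi (mem_of_mem_erase h)).trans (hb.2 i hi)
  · rintro ⟨⟨ha, haρ⟩, haj⟩
    refine ⟨ha, fun i hi => ?_⟩
    by_cases hij : i = j
    · exact hij ▸ haj
    · have hiJ : i ∉ J := fun h => hi (mem_erase.2 ⟨hij, h⟩)
      exact (haρ i hiJ).trans (hb.2 i hiJ).symm

lemma IPConstOn.slice_erase (h : IPConstOn J (Slice φ J ρ)) (hj : j ∈ J)
    (hb : b ∈ Slice φ J ρ) : IPConstOn (J.erase j) (Slice φ (J.erase j) b) := by
  rw [slice_erase_eq hb]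
  rintro a ⟨ha, haj⟩ a' ⟨ha', ha'j⟩
  have := h a ha a' ha'
  rw [partialIP_eq_add_erase hj, partialIP_eq_add_erase hj] at this
  simp only [pairVal, Prod.ext_iff] at haj ha'j
  rw [haj.1, haj.2, ha'j.1, ha'j.2] at this
  exact add_left_cancel this

lemma exists_forced_of_mem_slice (h2 : ∀ C ∈ φ, C.card ≤ 2)
    (hconst : IPConstOn J (Slice φ J ρ)) {v : ι ⊕ ι} (hv : pairIdx v ∈ J)
    {d b : ι ⊕ ι → ZMod 2} (hd : d ∈ Slice φ J ρ) (hb : b ∈ Slice φ J ρ)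
    (hdv : d v = 1) (hdv' : d v.swap = 1) (hbv : b v = 0) (hbv' : b v.swap = 1) :
    ∃ u, pairIdx u ∈ J.erase (pairIdx v) ∧ ∀ a ∈ Slice φ J ρ, a v = 0 → a u = b u := by
  have hflip : update d v (b v) ∉ SatAssignments φ := by
    intro hsat
    have hne : ∀ i ∉ J, i ≠ pairIdx v := fun i hi h => hi (h ▸ hv)
    have hmem : update d v (b v) ∈ Slice φ J ρ :=
      ⟨hsat, fun i hi => (pairVal_update_of_ne d (hne i hi) _).trans (hd.2 i hi)⟩
    have h := hconst _ hmem d hd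
    rw [partialIP_eq_add_erase hv, partialIP_eq_add_erase hv, ← mul_apply_swap,
      ← mul_apply_swap, partialIP_congr fun i hi => pairVal_update_of_ne d (ne_of_mem_erase hi) _,
      update_self, update_of_ne (swap_ne v), hbv, hdv, hdv'] at h
    exact absurd (add_right_cancel h) (by decide)
  obtain ⟨u, huv, hdu, hforce⟩ := exists_forced_of_update_notMem h2 hd.1 hb.1 hflip
  refine ⟨u, mem_erase.2 ⟨fun h => ?_, ?_⟩, fun a ha hav => hforce a ha.1 (hav.trans hbv.symm)⟩
  · rcases eq_or_eq_swap_of_pairIdx_eq h with rfl | rfl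
    · exact huv rfl
    · exact hdu (hdv'.trans hbv'.symm)
  · by_contra h
    exact hdu (apply_eq_of_pairVal_eq ((hd.2 _ h).trans (hb.2 _ h).symm))

variable [Finite ι] {m : ℕ}

lemma SliceBound.ncard_le (IH : SliceBound φ m) (hJ : J.card = m + 1)
    (hconst : IPConstOn J (Slice φ J ρ)) (hj : j ∈ J) {T : Set (ι ⊕ ι → ZMod 2)}
    (hT : T ⊆ Slice φ J ρ) (hTj : ∀ a ∈ T, ∀ a' ∈ T, pairVal a j = pairVal a' j) :
    T.ncard ≤ 3 ^ m := by
  obtain rfl | ⟨b, hb⟩ := T.eq_empty_or_nonempty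
  · simp
  have hTb : T ⊆ Slice φ (J.erase j) b := by
    rw [slice_erase_eq (hT hb)]
    exact fun a ha => ⟨hT ha, hTj a ha b hb⟩
  calc T.ncard ≤ (Slice φ (J.erase j) b).ncard := Set.ncard_le_ncard hTb (Set.toFinite _)
    _ ≤ 3 ^ m := IH _ _ (by rw [card_erase_of_mem hj, hJ]; rfl) (hconst.slice_erase hj (hT hb))

lemma SliceBound.ncard_fiber_le (IH : SliceBound φ m) (hJ : J.card = m + 1)
    (hconst : IPConstOn J (Slice φ J ρ)) (hj : j ∈ J) (p : ZMod 2 × ZMod 2) :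
    {a ∈ Slice φ J ρ | pairVal a j = p}.ncard ≤ 3 ^ m :=
  IH.ncard_le hJ hconst hj (Set.sep_subset _ _) fun _ ha _ ha' => ha.2.trans ha'.2.symm

/- Once `u` is fixed, the value of its partner `u.swap` determines the whole pair. -/
lemma SliceBound.ncard_le_two_mul (IH : SliceBound φ m) (hJ : J.card = m + 1)
    (hconst : IPConstOn J (Slice φ J ρ)) {u : ι ⊕ ι} (hu : pairIdx u ∈ J) {ε : ZMod 2}
    (hfix : ∀ a ∈ Slice φ J ρ, a u = ε) : (Slice φ J ρ).ncard ≤ 2 * 3 ^ m :=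
  calc (Slice φ J ρ).ncard ≤ ∑ t, {a ∈ Slice φ J ρ | a u.swap = t}.ncard :=
        ncard_le_sum_ncard_fiber _ _
    _ ≤ (univ : Finset (ZMod 2)).card • 3 ^ m :=
        sum_le_card_nsmul _ _ _ fun t _ => IH.ncard_le hJ hconst hu (Set.sep_subset _ _)
          fun a ha a' ha' => pairVal_eq_of_apply_eq ((hfix a ha.1).trans (hfix a' ha'.1).symm)
            (ha.2.trans ha'.2.symm)
    _ = 2 * 3 ^ m := by simp

lemma SliceBound.ncard_fiber_le_two_mul (IH : SliceBound φ m) (hJ : J.card = m + 2)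
    (hconst : IPConstOn J (Slice φ J ρ)) (hj : j ∈ J) {p : ZMod 2 × ZMod 2}
    (hp : ∃ a ∈ Slice φ J ρ, pairVal a j = p) {x : ι ⊕ ι} (hx : pairIdx x ∈ J.erase j)
    {ε : ZMod 2} (hfix : ∀ a ∈ Slice φ J ρ, pairVal a j = p → a x = ε) :
    {a ∈ Slice φ J ρ | pairVal a j = p}.ncard ≤ 2 * 3 ^ m := by
  obtain ⟨a₀, ha₀, rfl⟩ := hp
  have hfix' : ∀ a ∈ Slice φ (J.erase j) a₀, a x = ε := fun a ha => by
    rw [slice_erase_eq ha₀] at ha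
    exact hfix a ha.1 ha.2
  rw [← slice_erase_eq ha₀]
  exact IH.ncard_le_two_mul (by rw [card_erase_of_mem hj, hJ]; rfl)
    (hconst.slice_erase hj ha₀) hx hfix'

lemma SliceBound.ncard_le_of_fiber_eq_empty (IH : SliceBound φ m) (hJ : J.card = m + 1)
    (hconst : IPConstOn J (Slice φ J ρ)) (hj : j ∈ J) {p : ZMod 2 × ZMod 2}
    (hp : ∀ a ∈ Slice φ J ρ, pairVal a j ≠ p) : (Slice φ J ρ).ncard ≤ 3 ^ (m + 1) := by
  have hp₀ : {a ∈ Slice φ J ρ | pairVal a j = p} = ∅ :=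
    Set.eq_empty_of_forall_notMem fun a ha => hp a ha.1 ha.2
  calc (Slice φ J ρ).ncard ≤ ∑ q, {a ∈ Slice φ J ρ | pairVal a j = q}.ncard :=
        ncard_le_sum_ncard_fiber _ _
    _ = ∑ q ∈ univ.erase p, {a ∈ Slice φ J ρ | pairVal a j = q}.ncard := by
        rw [← add_sum_erase _ _ (mem_univ p), hp₀, Set.ncard_empty, zero_add]
    _ ≤ (univ.erase p).card • 3 ^ m :=
        sum_le_card_nsmul _ _ _ fun q _ => IH.ncard_fiber_le hJ hconst hj q
    _ = 3 ^ (m + 1) := by simp [card_erase_of_mem, pow_succ, mul_comm]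

lemma ncard_le_of_forall_fiber_nonempty (h2 : ∀ C ∈ φ, C.card ≤ 2)
    (IH : ∀ m' < m + 1, SliceBound φ m') (hJ : J.card = m + 1)
    (hconst : IPConstOn J (Slice φ J ρ)) (hj : j ∈ J)
    (hall : ∀ p, ∃ a ∈ Slice φ J ρ, pairVal a j = p) : (Slice φ J ρ).ncard ≤ 3 ^ (m + 1) := by
  obtain ⟨d, hd, hdj⟩ := hall (1, 1)
  obtain ⟨b, hb, hbj⟩ := hall (0, 1)
  obtain ⟨c, hc, hcj⟩ := hall (1, 0)
  simp only [pairVal, Prod.mk.injEq] at hdj hbj hcj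
  obtain ⟨u, hu, hxu⟩ := exists_forced_of_mem_slice h2 hconst (v := .inl j) hj hd hb
    hdj.1 hdj.2 hbj.1 hbj.2
  obtain ⟨w, hw, hyw⟩ := exists_forced_of_mem_slice h2 hconst (v := .inr j) hj hd hc
    hdj.2 hdj.1 hcj.2 hcj.1
  have hJj : (J.erase j).card = m := by rw [card_erase_of_mem hj, hJ]; rfl
  obtain ⟨m, rfl⟩ := Nat.exists_eq_add_one_of_ne_zero (hJj ▸ (card_pos.2 ⟨_, hu⟩).ne')
  have IH₀ := IH m (by omega)
  calc (Slice φ J ρ).ncard ≤ ∑ p, {a ∈ Slice φ J ρ | pairVal a j = p}.ncard :=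
        ncard_le_sum_ncard_fiber _ _
    _ = _ := sum_zmod_two_prod _
    _ ≤ 2 * 3 ^ m + 2 * 3 ^ m + (2 * 3 ^ m + 3 ^ (m + 1)) := by
        gcongr
        · exact IH₀.ncard_fiber_le_two_mul hJ hconst hj (hall _) hu
            fun a ha hp => hxu a ha (congrArg Prod.fst hp)
        · exact IH₀.ncard_fiber_le_two_mul hJ hconst hj (hall _) hu
            fun a ha hp => hxu a ha (congrArg Prod.fst hp)
        · exact IH₀.ncard_fiber_le_two_mul hJ hconst hj (hall _) hw
            fun a ha hp => hyw a ha (congrArg Prod.snd hp)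
        · exact (IH (m + 1) (by omega)).ncard_fiber_le hJ hconst hj _
    _ = 3 ^ (m + 1 + 1) := by ring

lemma sliceBound_of_forall_lt (h2 : ∀ C ∈ φ, C.card ≤ 2) {n : ℕ}
    (IH : ∀ m < n, SliceBound φ m) : SliceBound φ n := by
  obtain _ | m := n
  · exact sliceBound_zero
  intro J ρ hJ hconst
  obtain ⟨j, hj⟩ : J.Nonempty := card_pos.1 (by omega)
  by_cases hall : ∀ p, ∃ a ∈ Slice φ J ρ, pairVal a j = p
  · exact ncard_le_of_forall_fiber_nonempty h2 IH hJ hconst hj hall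
  · push Not at hall
    obtain ⟨p, hp⟩ := hall
    exact (IH m m.lt_succ_self).ncard_le_of_fiber_eq_empty hJ hconst hj hp

theorem sliceBound (h2 : ∀ C ∈ φ, C.card ≤ 2) (n : ℕ) : SliceBound φ n :=
  Nat.strong_induction_on n fun _ IH => sliceBound_of_forall_lt h2 IH

end PairedAssignment

open PairedAssignment in
theorem stmt_17_general {k : ℕ}
    (φ : List (Finset ((Fin k ⊕ Fin k) × ZMod 2)))
    (h2 : ∀ C ∈ φ, C.card ≤ 2)
    (hcons : ∀ a ∈ SatAssignments φ, IP k a) :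
    (SatAssignments φ).ncard ≤ 3 ^ k := by
  have hS : Slice φ univ 0 = SatAssignments φ := by
    ext a
    simp [Slice]
  rw [← hS]
  refine sliceBound h2 k univ 0 (card_fin k) fun a ha a' ha' => ?_
  rw [hS] at ha ha'
  exact (hcons a ha).trans (hcons a' ha').symm

theorem stmt_17 {k : ℕ} (hk : 1 ≤ k)
    (φ : List (Finset ((Fin k ⊕ Fin k) × ZMod 2)))
    (h2 : ∀ C ∈ φ, C.card ≤ 2)
    (hcons : ∀ a ∈ SatAssignments φ, IP k a) :
    (SatAssignments φ).ncard ≤ 3 ^ k :=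
  stmt_17_general φ h2 hcons
end

section
/- Let k ≥ 1 and let φ be a 2-CNF formula over the variables x_1,…,x_k, y_1,…,y_k that is consistent with the inner product. Let J ⊆ [k] be nonempty and suppose φ has two satisfying assignments σ and τ such that σ(x_i) = 0 and σ(y_i) = 1 for all i ∈ J, τ(x_i) = 1 and τ(y_i) = 0 for all i ∈ J, and σ(x_i) = τ(x_i) and σ(y_i) = τ(y_i) for all i ∈ [k] \ J. Then at least one of the following holds: (1) there exists i ∈ J such that every satisfying assignment α of φ satisfies α(x_i)·α(y_i) = 0; (2) there exist distinct i, j ∈ J such that every satisfying assignment α of φ satisfies α(x_i) = α(x_j). -/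
/-
2-CNF solution sets are closed under the pointwise majority operation. Fixing the
variables outside `J` to their values in `σ`, the majority with `σ` (which is `(0,1)`
on `J`) acts on the pairs `(xᵢ, yᵢ)`, `i ∈ J`, as `x ↦ x ∧ x'`, `y ↦ y ∨ y'`, and the
majority with `σ` and `τ` projects any solution onto this slice without changing it on `J`.
On the slice, consistency with IP forces an even number of `i ∈ J` with `xᵢ = yᵢ = 1`.
If no solution in the slice has such an `i`, conclusion (1) holds. Otherwise take one, `m`,
with the fewest `xᵢ = 1` on `J`; it has two such indices `i ≠ j`. For a solution `α` with
`α(xᵢ) = 1`, the majority of `σ`, `m`, `α` still has `i` as such an index, and minimality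
of `m` forces `α(xₗ) = 1` wherever `m(xₗ) = 1`; in particular `α(xⱼ) = 1`.
-/

open Finset Sum

/-- Over `𝔽₂`, and pointwise on assignments, this is the majority vote. -/
def majority {R : Type*} [Add R] [Mul R] (a b c : R) : R := a * b + a * c + b * c

theorem majority_apply {ι R : Type*} [Add R] [Mul R] (a b c : ι → R) (v : ι) :
    majority a b c v = majority (a v) (b v) (c v) := rfl

theorem majority_zero_left {R : Type*} [NonUnitalNonAssocSemiring R] (b c : R) :
    majority 0 b c = b * c := by
  simp [majority]

namespace ZMod

theorem majority_self_left (a b : ZMod 2) : majority a a b = a := by revert a b; decide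

theorem majority_self_mid (a b : ZMod 2) : majority a b a = a := by revert a b; decide

theorem majority_self_right (a b : ZMod 2) : majority b a a = a := by revert a b; decide

theorem majority_of_ne {a b : ZMod 2} (h : a ≠ b) (c : ZMod 2) : majority a b c = c := by
  revert a b c; decide

theorem eq_of_eq_one_iff_eq_one {a b : ZMod 2} (h : a = 1 ↔ b = 1) : a = b := by
  revert a b; decide

theorem eq_zero_of_ne_one {a : ZMod 2} (h : a ≠ 1) : a = 0 := by
  revert a; decide

theorem sum_eq_card_filter {ι : Type*} (s : Finset ι) (f : ι → ZMod 2) :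
    ∑ i ∈ s, f i = #{i ∈ s | f i = 1} := by
  rw [← sum_boole]
  refine sum_congr rfl fun i _ => ?_
  generalize f i = a
  revert a; decide

end ZMod

section Majority

variable {V : Type*}

theorem ClauseSat.majority {C : Finset (V × ZMod 2)} (hC : #C ≤ 2) {a b c : V → ZMod 2}
    (ha : ClauseSat C a) (hb : ClauseSat C b) (hc : ClauseSat C c) :
    ClauseSat C (majority a b c) := by
  obtain ⟨la, hla, hva⟩ := ha
  obtain ⟨lb, hlb, hvb⟩ := hb
  obtain ⟨lc, hlc, hvc⟩ := hc
  by_cases hab : la = lb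
  · subst hab
    exact ⟨la, hla, by rw [majority_apply, hva, hvb, ZMod.majority_self_left]⟩
  by_cases hac : la = lc
  · subst hac
    exact ⟨la, hla, by rw [majority_apply, hva, hvc, ZMod.majority_self_mid]⟩
  by_cases hbc : lb = lc
  · subst hbc
    exact ⟨lb, hlb, by rw [majority_apply, hvb, hvc, ZMod.majority_self_right]⟩
  exact absurd (two_lt_card_iff.2 ⟨la, lb, lc, hla, hlb, hlc, hab, hac, hbc⟩) hC.not_gt

theorem majority_mem_satAssignments {φ : List (Finset (V × ZMod 2))}
    (h2 : ∀ C ∈ φ, #C ≤ 2) {a b c : V → ZMod 2} (ha : a ∈ SatAssignments φ)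
    (hb : b ∈ SatAssignments φ) (hc : c ∈ SatAssignments φ) :
    majority a b c ∈ SatAssignments φ :=
  fun C hC => (ha C hC).majority (h2 C hC) (hb C hC) (hc C hC)

end Majority

section InnerProduct

variable {k : ℕ} {φ : List (Finset ((Fin k ⊕ Fin k) × ZMod 2))} {J : Finset (Fin k)}
  {σ τ m t α : (Fin k ⊕ Fin k) → ZMod 2}

def AgreeOff (J : Finset (Fin k)) (a b : (Fin k ⊕ Fin k) → ZMod 2) : Prop :=
  ∀ i ∉ J, a (inl i) = b (inl i) ∧ a (inr i) = b (inr i)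

theorem AgreeOff.majority (h : AgreeOff J σ m) (α : (Fin k ⊕ Fin k) → ZMod 2) :
    AgreeOff J σ (majority σ m α) := fun i hi =>
  ⟨by rw [majority_apply, ← (h i hi).1, ZMod.majority_self_left],
    by rw [majority_apply, ← (h i hi).2, ZMod.majority_self_left]⟩

def ipSupport (J : Finset (Fin k)) (t : (Fin k ⊕ Fin k) → ZMod 2) : Finset (Fin k) :=
  {i ∈ J | t (inl i) * t (inr i) = 1}

theorem sum_mul_eq_zero_of_agreeOff (hcons : ∀ a ∈ SatAssignments φ, IP k a)
    (hσ : σ ∈ SatAssignments φ) (hσJ : ∀ i ∈ J, σ (inl i) = 0)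
    (ht : t ∈ SatAssignments φ) (hσt : AgreeOff J σ t) :
    ∑ i ∈ J, t (inl i) * t (inr i) = 0 := by
  have hsplit (a : (Fin k ⊕ Fin k) → ZMod 2) :=
    sum_add_sum_compl J fun i => a (inl i) * a (inr i)
  have hcompl : ∑ i ∈ Jᶜ, t (inl i) * t (inr i) = ∑ i ∈ Jᶜ, σ (inl i) * σ (inr i) :=
    sum_congr rfl fun i hi => by
      rw [(hσt i (mem_compl.1 hi)).1, (hσt i (mem_compl.1 hi)).2]
  have hσ0 : ∑ i ∈ J, σ (inl i) * σ (inr i) = 0 :=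
    sum_eq_zero fun i hi => by rw [hσJ i hi, zero_mul]
  have hIPt : IP k t := hcons t ht
  have hIPσ : IP k σ := hcons σ hσ
  rw [IP, ← hsplit] at hIPt hIPσ
  linear_combination hIPt - hIPσ - hcompl + hσ0

theorem even_card_ipSupport (hcons : ∀ a ∈ SatAssignments φ, IP k a)
    (hσ : σ ∈ SatAssignments φ) (hσJ : ∀ i ∈ J, σ (inl i) = 0)
    (ht : t ∈ SatAssignments φ) (hσt : AgreeOff J σ t) : Even #(ipSupport J t) := by
  rw [← ZMod.natCast_eq_zero_iff_even, ipSupport, ← ZMod.sum_eq_card_filter]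
  exact sum_mul_eq_zero_of_agreeOff hcons hσ hσJ ht hσt

theorem exists_agreeOff_eqOn (h2 : ∀ C ∈ φ, #C ≤ 2) (hσ : σ ∈ SatAssignments φ)
    (hτ : τ ∈ SatAssignments φ) (hστ : AgreeOff J σ τ)
    (hστJ : ∀ i ∈ J, σ (inl i) ≠ τ (inl i) ∧ σ (inr i) ≠ τ (inr i))
    (hα : α ∈ SatAssignments φ) :
    ∃ t ∈ SatAssignments φ, AgreeOff J σ t ∧
      ∀ i ∈ J, t (inl i) = α (inl i) ∧ t (inr i) = α (inr i) :=
  ⟨majority σ τ α, majority_mem_satAssignments h2 hσ hτ hα, hστ.majority α, fun i hi =>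
    ⟨ZMod.majority_of_ne (hστJ i hi).1 _, ZMod.majority_of_ne (hστJ i hi).2 _⟩⟩

theorem inl_eq_one_of_minimal (h2 : ∀ C ∈ φ, #C ≤ 2) (hσ : σ ∈ SatAssignments φ)
    (hσJ : ∀ i ∈ J, σ (inl i) = 0 ∧ σ (inr i) = 1)
    (hm : m ∈ SatAssignments φ) (hσm : AgreeOff J σ m)
    (hmin : ∀ t ∈ SatAssignments φ, AgreeOff J σ t → (ipSupport J t).Nonempty →
      #{i ∈ J | m (inl i) = 1} ≤ #{i ∈ J | t (inl i) = 1})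
    (hα : α ∈ SatAssignments φ) {i : Fin k} (hi : i ∈ ipSupport J m) (hαi : α (inl i) = 1)
    {l : Fin k} (hl : l ∈ J) (hml : m (inl l) = 1) : α (inl l) = 1 := by
  set s := majority σ m α with hs
  have hsx : ∀ l ∈ J, s (inl l) = m (inl l) * α (inl l) := fun l hl => by
    rw [hs, majority_apply, (hσJ l hl).1, majority_zero_left]
  obtain ⟨hiJ, hmi⟩ := mem_filter.1 hi
  rw [mul_eq_one] at hmi
  have hsi : i ∈ ipSupport J s := by
    refine mem_filter.2 ⟨hiJ, ?_⟩
    rw [hsx i hiJ, hmi.1, hαi, hs, majority_apply, (hσJ i hiJ).2, hmi.2,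
      ZMod.majority_self_left, one_mul, one_mul]
  have hsub : {l ∈ J | s (inl l) = 1} ⊆ {l ∈ J | m (inl l) = 1} := fun l hl => by
    obtain ⟨hlJ, hsl⟩ := mem_filter.1 hl
    rw [hsx l hlJ, mul_eq_one] at hsl
    exact mem_filter.2 ⟨hlJ, hsl.1⟩
  have heq := eq_of_subset_of_card_le hsub
    (hmin s (majority_mem_satAssignments h2 hσ hm hα) (hσm.majority α) ⟨i, hsi⟩)
  have hls : l ∈ {l ∈ J | s (inl l) = 1} := heq ▸ mem_filter.2 ⟨hl, hml⟩
  rw [mem_filter, hsx l hl, mul_eq_one] at hls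
  exact hls.2.2

theorem inl_eq_inl_of_minimal (h2 : ∀ C ∈ φ, #C ≤ 2) (hσ : σ ∈ SatAssignments φ)
    (hσJ : ∀ i ∈ J, σ (inl i) = 0 ∧ σ (inr i) = 1)
    (hm : m ∈ SatAssignments φ) (hσm : AgreeOff J σ m)
    (hmin : ∀ t ∈ SatAssignments φ, AgreeOff J σ t → (ipSupport J t).Nonempty →
      #{i ∈ J | m (inl i) = 1} ≤ #{i ∈ J | t (inl i) = 1})
    (hα : α ∈ SatAssignments φ) {i j : Fin k} (hi : i ∈ ipSupport J m)
    (hj : j ∈ ipSupport J m) : α (inl i) = α (inl j) := by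
  have himp {i j : Fin k} (hi : i ∈ ipSupport J m) (hj : j ∈ ipSupport J m)
      (hαi : α (inl i) = 1) : α (inl j) = 1 :=
    inl_eq_one_of_minimal h2 hσ hσJ hm hσm hmin hα hi hαi (mem_filter.1 hj).1
      (mul_eq_one.1 (mem_filter.1 hj).2).1
  exact ZMod.eq_of_eq_one_iff_eq_one ⟨himp hi hj, himp hj hi⟩

end InnerProduct

theorem stmt_18_general {k : ℕ}
    (φ : List (Finset ((Fin k ⊕ Fin k) × ZMod 2)))
    (h2 : ∀ C ∈ φ, C.card ≤ 2)
    (hcons : ∀ a ∈ SatAssignments φ, IP k a)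
    (J : Finset (Fin k)) (hJ : J.Nonempty)
    (σ τ : (Fin k ⊕ Fin k) → ZMod 2)
    (hσ : σ ∈ SatAssignments φ) (hτ : τ ∈ SatAssignments φ)
    (hσJ : ∀ i ∈ J, σ (Sum.inl i) = 0 ∧ σ (Sum.inr i) = 1)
    (hτJ : ∀ i ∈ J, τ (Sum.inl i) = 1 ∧ τ (Sum.inr i) = 0)
    (hagree : ∀ i ∉ J, σ (Sum.inl i) = τ (Sum.inl i) ∧ σ (Sum.inr i) = τ (Sum.inr i)) :
    (∃ i ∈ J, ∀ α ∈ SatAssignments φ, α (Sum.inl i) * α (Sum.inr i) = 0) ∨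
    (∃ i ∈ J, ∃ j ∈ J, i ≠ j ∧
      ∀ α ∈ SatAssignments φ, α (Sum.inl i) = α (Sum.inl j)) := by
  by_cases H : ∃ t ∈ SatAssignments φ, AgreeOff J σ t ∧ (ipSupport J t).Nonempty
  · obtain ⟨m, ⟨hm, hσm, hmne⟩, hmin⟩ := Set.exists_min_image
      {t | t ∈ SatAssignments φ ∧ AgreeOff J σ t ∧ (ipSupport J t).Nonempty}
      (fun t => #{i ∈ J | t (inl i) = 1}) (Set.toFinite _) H
    have hcard : 1 < #(ipSupport J m) := by
      have := even_card_ipSupport hcons hσ (fun i hi => (hσJ i hi).1) hm hσm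
      have := hmne.card_pos
      grind
    obtain ⟨i, hi, j, hj, hij⟩ := one_lt_card.1 hcard
    exact .inr ⟨i, (mem_filter.1 hi).1, j, (mem_filter.1 hj).1, hij, fun α hα =>
      inl_eq_inl_of_minimal h2 hσ hσJ hm hσm (fun t ht hσt hne => hmin t ⟨ht, hσt, hne⟩) hα hi hj⟩
  · push Not at H
    obtain ⟨i, hi⟩ := hJ
    refine .inl ⟨i, hi, fun α hα => ?_⟩
    obtain ⟨t, ht, hσt, htα⟩ := exists_agreeOff_eqOn h2 hσ hτ hagree (fun i hi =>
      ⟨by simp [(hσJ i hi).1, (hτJ i hi).1], by simp [(hσJ i hi).2, (hτJ i hi).2]⟩) hα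
    have hit : i ∉ ipSupport J t := by simp [H t ht hσt]
    rw [ipSupport, mem_filter, (htα i hi).1, (htα i hi).2] at hit
    exact ZMod.eq_zero_of_ne_one fun h => hit ⟨hi, h⟩

theorem stmt_18 {k : ℕ} (hk : 1 ≤ k)
    (φ : List (Finset ((Fin k ⊕ Fin k) × ZMod 2)))
    (h2 : ∀ C ∈ φ, C.card ≤ 2)
    (hcons : ∀ a ∈ SatAssignments φ, IP k a)
    (J : Finset (Fin k)) (hJ : J.Nonempty)
    (σ τ : (Fin k ⊕ Fin k) → ZMod 2)
    (hσ : σ ∈ SatAssignments φ) (hτ : τ ∈ SatAssignments φ)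
    (hσJ : ∀ i ∈ J, σ (Sum.inl i) = 0 ∧ σ (Sum.inr i) = 1)
    (hτJ : ∀ i ∈ J, τ (Sum.inl i) = 1 ∧ τ (Sum.inr i) = 0)
    (hagree : ∀ i ∉ J, σ (Sum.inl i) = τ (Sum.inl i) ∧ σ (Sum.inr i) = τ (Sum.inr i)) :
    (∃ i ∈ J, ∀ α ∈ SatAssignments φ, α (Sum.inl i) * α (Sum.inr i) = 0) ∨
    (∃ i ∈ J, ∃ j ∈ J, i ≠ j ∧
      ∀ α ∈ SatAssignments φ, α (Sum.inl i) = α (Sum.inl j)) :=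
  stmt_18_general φ h2 hcons J hJ σ τ hσ hτ hσJ hτJ hagree
end

section
/- Let k ≥ 1 and let φ be a 2-CNF formula over the variables x_1,…,x_k, y_1,…,y_k that is consistent with the inner product and satisfies |sat(φ)| = 3^k. Then sat(φ) = {(x, y) ∈ {0,1}^{2k} : x_i·y_i = 0 for every i ∈ [k]}; equivalently, φ is logically equivalent to the formula ⋀_{i=1}^k (¬x_i ∨ ¬y_i). -/
namespace IPAux

abbrev B2 := ZMod 2
abbrev PP := B2 × B2
abbrev A (k : ℕ) := Fin k → PP

def maj (a b c : B2) : B2 := a*b + b*c + c*a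
def pmaj (p q r : PP) : PP := (maj p.1 q.1 r.1, maj p.2 q.2 r.2)
def pmed {k : ℕ} (f g h : A k) : A k := fun i => pmaj (f i) (g i) (h i)

def MC {k : ℕ} (S : Set (A k)) : Prop :=
  ∀ f ∈ S, ∀ g ∈ S, ∀ h ∈ S, pmed f g h ∈ S

def sig {k : ℕ} (f : A k) : B2 := ∑ i, (f i).1 * (f i).2

def Zs (k : ℕ) : Set (A k) := {f | sig f = 0}
def Ns (k : ℕ) : Set (A k) := {f | sig f = 1}
def Ts (k : ℕ) : Set (A k) := {f | ∀ i, (f i).1 * (f i).2 = 0}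

lemma pmaj_self (p : PP) : pmaj p p p = p := by revert p; decide
lemma pmaj_xyy (p q : PP) : pmaj p q q = q := by revert p q; decide

def slice {m : ℕ} (S : Set (A (m+1))) (p : PP) : Set (A m) :=
  {f | Fin.snoc f p ∈ S}

lemma snoc_pmed {m : ℕ} (u v w : A m) (p q r : PP) :
    pmed (Fin.snoc u p) (Fin.snoc v q) (Fin.snoc w r)
      = Fin.snoc (pmed u v w) (pmaj p q r) := by
  funext i
  refine Fin.lastCases ?_ ?_ i <;> simp [pmed, Fin.snoc_last, Fin.snoc_castSucc]

lemma slice_MC {m : ℕ} {S : Set (A (m+1))} (hS : MC S) (p : PP) :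
    MC (slice S p) := by
  intro f hf g hg h hh
  have := hS _ hf _ hg _ hh
  rw [snoc_pmed, pmaj_self] at this
  exact this

lemma sig_snoc {m : ℕ} (f : A m) (p : PP) :
    sig (Fin.snoc f p) = sig f + p.1 * p.2 := by
  unfold sig
  rw [Fin.sum_univ_castSucc]
  simp [Fin.snoc_last, Fin.snoc_castSucc]

-- counting: ncard S = sum of slice ncards over the four pair values
lemma part_card {m : ℕ} (S : Set (A (m+1))) (p : PP) :
    ({f ∈ S | f (Fin.last m) = p}).ncard = (slice S p).ncard := by
  have himg : Fin.init '' {f ∈ S | f (Fin.last m) = p} = slice S p := by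
    ext g
    constructor
    · rintro ⟨f, ⟨hf, hlast⟩, rfl⟩
      have : Fin.snoc (Fin.init f) (f (Fin.last m)) = f := Fin.snoc_init_self f
      simpa [slice, hlast ▸ this] using (by rw [hlast] at this; rw [this]; exact hf : Fin.snoc (Fin.init f) p ∈ S)
    · intro hg
      exact ⟨Fin.snoc g p, ⟨hg, by simp⟩, by simp [Fin.init_snoc]⟩
  have hinj : Set.InjOn Fin.init {f ∈ S | f (Fin.last m) = p} := by
    rintro f ⟨_, hf⟩ g ⟨_, hg⟩ h
    calc f = Fin.snoc (Fin.init f) (f (Fin.last m)) := (Fin.snoc_init_self f).symm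
      _ = Fin.snoc (Fin.init g) (g (Fin.last m)) := by rw [h, hf, hg]
      _ = g := Fin.snoc_init_self g
  rw [← himg, Set.ncard_image_of_injOn hinj]

lemma card_decomp {m : ℕ} (S : Set (A (m+1))) :
    S.ncard = (slice S (0,0)).ncard + (slice S (0,1)).ncard
      + (slice S (1,0)).ncard + (slice S (1,1)).ncard := by
  classical
  have hp : ∀ p : PP, p = (0,0) ∨ p = (0,1) ∨ p = (1,0) ∨ p = (1,1) := by decide
  have hd : ∀ p q : PP, p ≠ q →
      Disjoint {f ∈ S | f (Fin.last m) = p} {f ∈ S | f (Fin.last m) = q} := by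
    intro p q hpq
    rw [Set.disjoint_left]
    rintro f ⟨_, h1⟩ ⟨_, h2⟩
    exact hpq (h1 ▸ h2 ▸ rfl)
  have hcov : S = {f ∈ S | f (Fin.last m) = (0,0)} ∪ {f ∈ S | f (Fin.last m) = (0,1)}
      ∪ {f ∈ S | f (Fin.last m) = (1,0)} ∪ {f ∈ S | f (Fin.last m) = (1,1)} := by
    ext f
    constructor
    · intro hf
      rcases hp (f (Fin.last m)) with h | h | h | h <;> simp [hf, h]
    · intro hf
      rcases hf with ((⟨h,_⟩|⟨h,_⟩)|⟨h,_⟩)|⟨h,_⟩ <;> exact h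
  nth_rewrite 1 [hcov]
  rw [Set.ncard_union_eq (by
      refine Set.disjoint_union_left.mpr ⟨Set.disjoint_union_left.mpr ⟨?_, ?_⟩, ?_⟩ <;>
        exact hd _ _ (by decide)) (Set.toFinite _) (Set.toFinite _),
    Set.ncard_union_eq (by
      refine Set.disjoint_union_left.mpr ⟨?_, ?_⟩ <;> exact hd _ _ (by decide))
      (Set.toFinite _) (Set.toFinite _),
    Set.ncard_union_eq (hd _ _ (by decide)) (Set.toFinite _) (Set.toFinite _)]
  rw [part_card, part_card, part_card, part_card]


lemma pmed_xyy {m : ℕ} (f g : A m) : pmed f g g = g := by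
  funext i; exact pmaj_xyy _ _

-- union of the (0,1) and (1,0) slices is median closed
lemma union_MC {m : ℕ} {S : Set (A (m+1))} (hS : MC S) :
    MC (slice S (0,1) ∪ slice S (1,0)) := by
  intro f hf g hg h hh
  have key : ∀ {f : A m}, f ∈ slice S (0,1) ∪ slice S (1,0) →
      ∃ p : PP, (p = (0,1) ∨ p = (1,0)) ∧ Fin.snoc f p ∈ S := by
    rintro f (hf | hf)
    · exact ⟨(0,1), Or.inl rfl, hf⟩
    · exact ⟨(1,0), Or.inr rfl, hf⟩
  obtain ⟨p, hp, hfp⟩ := key hf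
  obtain ⟨q, hq, hgq⟩ := key hg
  obtain ⟨r, hr, hhr⟩ := key hh
  have hmem := hS _ hfp _ hgq _ hhr
  rw [snoc_pmed] at hmem
  have : pmaj p q r = (0,1) ∨ pmaj p q r = (1,0) := by
    rcases hp with rfl | rfl <;> rcases hq with rfl | rfl <;> rcases hr with rfl | rfl <;> decide
  rcases this with h' | h'
  · exact Or.inl (by rw [h'] at hmem; exact hmem)
  · exact Or.inr (by rw [h'] at hmem; exact hmem)

-- key disjointness driver
lemma cross_mem {m : ℕ} {S : Set (A (m+1))} (hS : MC S)
    (hne : (slice S (1,1)).Nonempty) {f : A m}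
    (h01 : f ∈ slice S (0,1)) (h10 : f ∈ slice S (1,0)) :
    f ∈ slice S (1,1) := by
  obtain ⟨a, ha⟩ := hne
  have hmem := hS _ ha _ h01 _ h10
  rw [snoc_pmed, pmed_xyy] at hmem
  have : pmaj (1,1) (0,1) (1,0) = (1,1) := by decide
  rw [this] at hmem
  exact hmem

lemma zmod2_cases (z : B2) : z = 0 ∨ z = 1 := by revert z; decide

lemma slice_sub_Zs {m : ℕ} {S : Set (A (m+1))} (hsub : S ⊆ Zs (m+1))
    {p : PP} (hp : p.1 * p.2 = 0) : slice S p ⊆ Zs m := by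
  intro f hf
  have := hsub hf
  simp only [Zs, Set.mem_setOf_eq, sig_snoc, hp, add_zero] at this ⊢
  exact this

lemma slice11_sub_Ns {m : ℕ} {S : Set (A (m+1))} (hsub : S ⊆ Zs (m+1)) :
    slice S ((1,1) : PP) ⊆ Ns m := by
  intro f hf
  have h := hsub hf
  simp only [Zs, Set.mem_setOf_eq, sig_snoc] at h
  rcases zmod2_cases (sig f) with h0 | h1
  · rw [h0] at h; exfalso; revert h; decide
  · exact h1

lemma slice_sub_Ns {m : ℕ} {S : Set (A (m+1))} (hsub : S ⊆ Ns (m+1))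
    {p : PP} (hp : p.1 * p.2 = 0) : slice S p ⊆ Ns m := by
  intro f hf
  have := hsub hf
  simp only [Ns, Set.mem_setOf_eq, sig_snoc, hp, add_zero] at this ⊢
  exact this

lemma slice11_sub_Zs {m : ℕ} {S : Set (A (m+1))} (hsub : S ⊆ Ns (m+1)) :
    slice S ((1,1) : PP) ⊆ Zs m := by
  intro f hf
  have h := hsub hf
  simp only [Ns, Set.mem_setOf_eq, sig_snoc] at h
  rcases zmod2_cases (sig f) with h0 | h1
  · exact h0
  · rw [h1] at h; exfalso; revert h; decide

lemma key (k : ℕ) :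
    (∀ S : Set (A k), MC S → S ⊆ Zs k →
      S.ncard ≤ 3^k ∧ (S.ncard = 3^k → S = Ts k)) ∧
    (∀ S : Set (A k), MC S → S ⊆ Ns k → S.ncard + 1 ≤ 3^k) := by
  induction k with
  | zero =>
    constructor
    · intro S _ _
      have huniv : (Set.univ : Set (A 0)).ncard = 1 := by
        rw [Set.ncard_univ, Nat.card_eq_fintype_card]
        simp
      constructor
      · calc S.ncard ≤ (Set.univ : Set (A 0)).ncard :=
              Set.ncard_le_ncard (Set.subset_univ S) (Set.toFinite _)
          _ = 1 := huniv
      · intro hc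
        have hTu : Ts 0 = (Set.univ : Set (A 0)) := by
          ext f; simp only [Ts, Set.mem_setOf_eq, Set.mem_univ, iff_true]
          exact fun i => i.elim0
        rw [hTu]
        exact Set.eq_of_subset_of_ncard_le (Set.subset_univ S)
          (by rw [huniv, hc]; norm_num) (Set.toFinite _)
    · intro S _ hsub
      have : S = ∅ := by
        rw [Set.eq_empty_iff_forall_notMem]
        intro f hf
        have := hsub hf
        simp only [Ns, Set.mem_setOf_eq, sig] at this
        rw [Fin.sum_univ_zero] at this
        revert this; decide
      rw [this, Set.ncard_empty]; norm_num
  | succ m ih =>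
    obtain ⟨ihA, ihB⟩ := ih
    have h3 : (3:ℕ)^(m+1) = 3^m * 3 := pow_succ 3 m
    constructor
    · -- A case
      intro S hMC hsub
      have hmc00 := slice_MC hMC ((0,0) : PP)
      have hmc01 := slice_MC hMC ((0,1) : PP)
      have hmc10 := slice_MC hMC ((1,0) : PP)
      have hmc11 := slice_MC hMC ((1,1) : PP)
      have hs00 : slice S (0,0) ⊆ Zs m := slice_sub_Zs hsub (by decide)
      have hs01 : slice S (0,1) ⊆ Zs m := slice_sub_Zs hsub (by decide)
      have hs10 : slice S (1,0) ⊆ Zs m := slice_sub_Zs hsub (by decide)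
      have hs11 : slice S (1,1) ⊆ Ns m := slice11_sub_Ns hsub
      have hb00 := (ihA _ hmc00 hs00).1
      have hb01 := (ihA _ hmc01 hs01).1
      have hb10 := (ihA _ hmc10 hs10).1
      have hdec := card_decomp S
      rcases Set.eq_empty_or_nonempty (slice S ((1,1) : PP)) with hemp | hne
      · have hc11 : (slice S ((1,1):PP)).ncard = 0 := by rw [hemp, Set.ncard_empty]
        constructor
        · omega
        · intro hc
          have he00 : (slice S ((0,0):PP)).ncard = 3^m := by omega
          have he01 : (slice S ((0,1):PP)).ncard = 3^m := by omega
          have he10 : (slice S ((1,0):PP)).ncard = 3^m := by omega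
          have hT00 := (ihA _ hmc00 hs00).2 he00
          have hT01 := (ihA _ hmc01 hs01).2 he01
          have hT10 := (ihA _ hmc10 hs10).2 he10
          ext f
          constructor
          · intro hf
            have hfs : Fin.init f ∈ slice S (f (Fin.last m)) := by
              simp only [slice, Set.mem_setOf_eq, Fin.snoc_init_self]
              exact hf
            have hpc : f (Fin.last m) = (0,0) ∨ f (Fin.last m) = (0,1)
                ∨ f (Fin.last m) = (1,0) ∨ f (Fin.last m) = (1,1) := by
              rcases zmod2_cases (f (Fin.last m)).1 with h1 | h1 <;>
                rcases zmod2_cases (f (Fin.last m)).2 with h2 | h2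
              · left; ext : 1 <;> simp [h1, h2]
              · right; left; ext : 1 <;> simp [h1, h2]
              · right; right; left; ext : 1 <;> simp [h1, h2]
              · right; right; right; ext : 1 <;> simp [h1, h2]
            have hinitT : Fin.init f ∈ Ts m ∧ (f (Fin.last m)).1 * (f (Fin.last m)).2 = 0 := by
              rcases hpc with h | h | h | h <;> rw [h] at hfs
              · exact ⟨hT00 ▸ hfs, by rw [h]; decide⟩
              · exact ⟨hT01 ▸ hfs, by rw [h]; decide⟩
              · exact ⟨hT10 ▸ hfs, by rw [h]; decide⟩
              · exact absurd hfs (by rw [hemp]; exact Set.notMem_empty _)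
            intro i
            refine Fin.lastCases ?_ ?_ i
            · exact hinitT.2
            · intro j
              exact hinitT.1 j
          · intro hf
            have hlast : (f (Fin.last m)).1 * (f (Fin.last m)).2 = 0 := hf (Fin.last m)
            have hinit : Fin.init f ∈ Ts m := fun j => hf j.castSucc
            have hpc : f (Fin.last m) = (0,0) ∨ f (Fin.last m) = (0,1)
                ∨ f (Fin.last m) = (1,0) := by
              rcases zmod2_cases (f (Fin.last m)).1 with h1 | h1 <;>
                rcases zmod2_cases (f (Fin.last m)).2 with h2 | h2
              · left; ext : 1 <;> simp [h1, h2]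
              · right; left; ext : 1 <;> simp [h1, h2]
              · right; right; ext : 1 <;> simp [h1, h2]
              · exfalso; rw [h1, h2] at hlast; revert hlast; decide
            have hmem : Fin.snoc (Fin.init f) (f (Fin.last m)) ∈ S := by
              rcases hpc with h | h | h <;> rw [h]
              · exact (hT00 ▸ hinit : Fin.init f ∈ slice S (0,0))
              · exact (hT01 ▸ hinit : Fin.init f ∈ slice S (0,1))
              · exact (hT10 ▸ hinit : Fin.init f ∈ slice S (1,0))
            rwa [Fin.snoc_init_self] at hmem
      · -- slice 11 nonempty : strict bound
        have hdisj : Disjoint (slice S ((0,1):PP)) (slice S ((1,0):PP)) := by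
          rw [Set.disjoint_left]
          intro f h01 h10
          have h11 := cross_mem hMC hne h01 h10
          have hz : sig f = 0 := hs01 h01
          have hn : sig f = 1 := hs11 h11
          rw [hz] at hn; revert hn; decide
        have hcup : (slice S ((0,1):PP) ∪ slice S ((1,0):PP)).ncard
            = (slice S ((0,1):PP)).ncard + (slice S ((1,0):PP)).ncard :=
          Set.ncard_union_eq hdisj (Set.toFinite _) (Set.toFinite _)
        have hbu : (slice S ((0,1):PP) ∪ slice S ((1,0):PP)).ncard ≤ 3^m :=
          (ihA _ (union_MC hMC) (Set.union_subset hs01 hs10)).1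
        have hb11 := ihB _ hmc11 hs11
        constructor
        · omega
        · intro hc; omega
    · -- B case
      intro S hMC hsub
      have hmc00 := slice_MC hMC ((0,0) : PP)
      have hmc01 := slice_MC hMC ((0,1) : PP)
      have hmc10 := slice_MC hMC ((1,0) : PP)
      have hmc11 := slice_MC hMC ((1,1) : PP)
      have hs00 : slice S (0,0) ⊆ Ns m := slice_sub_Ns hsub (by decide)
      have hs01 : slice S (0,1) ⊆ Ns m := slice_sub_Ns hsub (by decide)
      have hs10 : slice S (1,0) ⊆ Ns m := slice_sub_Ns hsub (by decide)
      have hs11 : slice S (1,1) ⊆ Zs m := slice11_sub_Zs hsub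
      have hb00 := ihB _ hmc00 hs00
      have hb11 := (ihA _ hmc11 hs11).1
      have hdec := card_decomp S
      rcases Set.eq_empty_or_nonempty (slice S ((1,1) : PP)) with hemp | hne
      · have hc11 : (slice S ((1,1):PP)).ncard = 0 := by rw [hemp, Set.ncard_empty]
        have hb01 := ihB _ hmc01 hs01
        have hb10 := ihB _ hmc10 hs10
        omega
      · have hdisj : Disjoint (slice S ((0,1):PP)) (slice S ((1,0):PP)) := by
          rw [Set.disjoint_left]
          intro f h01 h10
          have h11 := cross_mem hMC hne h01 h10
          have hz : sig f = 0 := hs11 h11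
          have hn : sig f = 1 := hs01 h01
          rw [hz] at hn; revert hn; decide
        have hcup : (slice S ((0,1):PP) ∪ slice S ((1,0):PP)).ncard
            = (slice S ((0,1):PP)).ncard + (slice S ((1,0):PP)).ncard :=
          Set.ncard_union_eq hdisj (Set.toFinite _) (Set.toFinite _)
        have hbu : (slice S ((0,1):PP) ∪ slice S ((1,0):PP)).ncard + 1 ≤ 3^m :=
          ihB _ (union_MC hMC) (Set.union_subset hs01 hs10)
        omega

lemma maj_xxy (x y : B2) : maj x x y = x := by revert x y; decide
lemma maj_xyx (x y : B2) : maj x y x = x := by revert x y; decide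
lemma maj_yxx (x y : B2) : maj y x x = x := by revert x y; decide

def vmed {V : Type*} (a b c : V → B2) : V → B2 := fun v => maj (a v) (b v) (c v)

lemma sat_med {V : Type*} [DecidableEq (V × ZMod 2)] {φ : List (Finset (V × ZMod 2))}
    (h2 : ∀ C ∈ φ, C.card ≤ 2) {a b c : V → B2}
    (ha : a ∈ SatAssignments φ) (hb : b ∈ SatAssignments φ)
    (hc : c ∈ SatAssignments φ) : vmed a b c ∈ SatAssignments φ := by
  intro C hC
  obtain ⟨la, hla, hva⟩ := ha C hC
  obtain ⟨lb, hlb, hvb⟩ := hb C hC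
  obtain ⟨lc, hlc, hvc⟩ := hc C hC
  have htwo : la = lb ∨ la = lc ∨ lb = lc := by
    by_contra hcon
    push_neg at hcon
    obtain ⟨h1, h2', h3⟩ := hcon
    have hsub : ({la, lb, lc} : Finset (V × ZMod 2)) ⊆ C := by
      intro x hx
      simp only [Finset.mem_insert, Finset.mem_singleton] at hx
      rcases hx with rfl | rfl | rfl <;> assumption
    have hcard3 : ({la, lb, lc} : Finset (V × ZMod 2)).card = 3 := by
      rw [Finset.card_insert_of_notMem (by simp [h1, h2']),
        Finset.card_insert_of_notMem (by simp [h3]), Finset.card_singleton]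
    have := Finset.card_le_card hsub
    have := h2 C hC
    omega
  rcases htwo with h | h | h
  · subst h
    exact ⟨la, hla, by simp only [vmed, hva, hvb, maj_xxy]⟩
  · subst h
    exact ⟨la, hla, by simp only [vmed, hva, hvc, maj_xyx]⟩
  · subst h
    exact ⟨lb, hlb, by simp only [vmed, hvb, hvc, maj_yxx]⟩

def emb (k : ℕ) (a : (Fin k ⊕ Fin k) → B2) : A k := fun i => (a (Sum.inl i), a (Sum.inr i))

lemma emb_inj (k : ℕ) : Function.Injective (emb k) := by
  intro a b h
  funext v
  cases v with
  | inl i => exact congrArg Prod.fst (congrFun h i)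
  | inr i => exact congrArg Prod.snd (congrFun h i)

lemma emb_pmed (k : ℕ) (a b c : (Fin k ⊕ Fin k) → B2) :
    pmed (emb k a) (emb k b) (emb k c) = emb k (vmed a b c) := rfl

end IPAux

open IPAux in
theorem stmt_19 {k : ℕ} (hk : 1 ≤ k)
    (φ : List (Finset ((Fin k ⊕ Fin k) × ZMod 2)))
    (h2 : ∀ C ∈ φ, C.card ≤ 2)
    (hcons : ∀ a ∈ SatAssignments φ, IP k a)
    (hcard : (SatAssignments φ).ncard = 3 ^ k) :
    SatAssignments φ =
      {a : (Fin k ⊕ Fin k) → ZMod 2 | ∀ i : Fin k, a (Sum.inl i) * a (Sum.inr i) = 0} := by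
  classical
  set S' : Set (A k) := emb k '' SatAssignments φ with hS'
  have hMC : MC S' := by
    rintro _ ⟨a, ha, rfl⟩ _ ⟨b, hb, rfl⟩ _ ⟨c, hc, rfl⟩
    rw [emb_pmed]
    exact ⟨vmed a b c, sat_med h2 ha hb hc, rfl⟩
  have hsub : S' ⊆ Zs k := by
    rintro _ ⟨a, ha, rfl⟩
    exact hcons a ha
  have hcard' : S'.ncard = 3 ^ k := by
    rw [hS', Set.ncard_image_of_injective _ (emb_inj k), hcard]
  have hT : S' = Ts k := ((key k).1 S' hMC hsub).2 hcard'
  ext a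
  constructor
  · intro ha
    intro i
    have : emb k a ∈ Ts k := hT ▸ ⟨a, ha, rfl⟩
    exact this i
  · intro ha
    have : emb k a ∈ Ts k := fun i => ha i
    rw [← hT] at this
    obtain ⟨b, hb, hba⟩ := this
    rwa [← emb_inj k hba]
end
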